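/- Let Λ be a finite Borel measure on [0,τ], g : [0,τ] → [0,∞) a measurable function, and S : [0,τ] → [0,∞) a Lebesgue-measurable function. Then ∫_0^τ ∫_0^τ S(t) S(s) (∫_{[0, min(s,t)]} g dΛ) dt ds = ∫_{[0,τ]} (∫_x^τ S(t) dt)² g(x) dΛ(x), where the outer double integral is with respect to Lebesgue measure on [0,τ]² and ∫_x^τ S(t) dt denotes the Lebesgue integral of S over [x,τ]. (Both sides may be +∞ simultaneously.) -/

import Mathlib

open MeasureTheory Set
open scoped ENNReal

/-!
Since `x ∈ [0, min s t]` iff `x ≤ s` and `x ≤ t`, the integrand of the left-hand side is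
`∫ k(t,x) k(s,x) g(x) dΛ(x)` with `k(t,x) = S(t) 1{x ≤ t}`. By Tonelli the `x`-integral can be
taken outermost, and the remaining integral over `(t,s)` factors as `(∫ k(t,x) dt)²`, where
`∫_0^τ k(t,x) dt = ∫_x^τ S(t) dt`.
-/

namespace RMST

theorem lintegral_lintegral_lintegral_mul_mul_eq_lintegral_sq_mul
    {α β : Type*} [MeasurableSpace α] [MeasurableSpace β]
    {μ : Measure α} {ν : Measure β} [SFinite μ] [SFinite ν]
    {k : α → β → ℝ≥0∞} (hk : Measurable (Function.uncurry k))
    {h : β → ℝ≥0∞} (hh : Measurable h) :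
    ∫⁻ t, ∫⁻ s, ∫⁻ x, k t x * k s x * h x ∂ν ∂μ ∂μ
      = ∫⁻ x, (∫⁻ t, k t x ∂μ) ^ 2 * h x ∂ν := by
  have hk₁ : Measurable fun q : (α × α) × β => k q.1.1 q.2 :=
    hk.comp (measurable_fst.fst.prodMk measurable_snd)
  have hk₂ : Measurable fun q : (α × α) × β => k q.1.2 q.2 :=
    hk.comp (measurable_fst.snd.prodMk measurable_snd)
  have hF : Measurable fun q : (α × α) × β => k q.1.1 q.2 * k q.1.2 q.2 * h q.2 :=
    (hk₁.mul hk₂).mul (hh.comp measurable_snd)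
  calc ∫⁻ t, ∫⁻ s, ∫⁻ x, k t x * k s x * h x ∂ν ∂μ ∂μ
      = ∫⁻ p, ∫⁻ x, k p.1 x * k p.2 x * h x ∂ν ∂μ.prod μ :=
        (lintegral_prod _ hF.lintegral_prod_right'.aemeasurable).symm
    _ = ∫⁻ x, ∫⁻ p, k p.1 x * k p.2 x * h x ∂μ.prod μ ∂ν :=
        lintegral_lintegral_swap hF.aemeasurable
    _ = ∫⁻ x, (∫⁻ t, k t x ∂μ) ^ 2 * h x ∂ν := by
        refine lintegral_congr fun x => ?_
        have hkx : Measurable fun t => k t x := hk.comp (measurable_id.prodMk measurable_const)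
        rw [lintegral_mul_const _ (by fun_prop : Measurable fun p : α × α => k p.1 x * k p.2 x),
          lintegral_prod_mul hkx.aemeasurable hkx.aemeasurable, sq]

theorem measurable_uncurry_indicator_Ici {f : ℝ → ℝ≥0∞} (hf : Measurable f) :
    Measurable (Function.uncurry fun t x : ℝ => (Ici x).indicator f t) :=
  (hf.comp measurable_fst).indicator (measurableSet_le measurable_snd measurable_fst)

theorem indicator_Ici_mul_indicator_Ici_mul (f h : ℝ → ℝ≥0∞) (s t x : ℝ) :
    (Ici x).indicator f t * (Ici x).indicator f s * h x
      = (Iic (min s t)).indicator (fun y => f t * f s * h y) x := by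
  by_cases hs : x ≤ s <;> by_cases ht : x ≤ t <;> simp [hs, ht]

theorem mul_setLIntegral_Icc_min_eq {τ s t : ℝ} (hs : s ≤ τ) (Λ : Measure ℝ)
    (f h : ℝ → ℝ≥0∞) (hh : Measurable h) :
    f t * f s * ∫⁻ x in Icc 0 (min s t), h x ∂Λ
      = ∫⁻ x in Icc 0 τ, (Ici x).indicator f t * (Ici x).indicator f s * h x ∂Λ := by
  have hIcc : Iic (min s t) ∩ Icc 0 τ = Icc 0 (min s t) := by
    ext x
    simp only [mem_inter_iff, mem_Iic, mem_Icc]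
    constructor
    · rintro ⟨hxm, h0x, -⟩
      exact ⟨h0x, hxm⟩
    · rintro ⟨h0x, hxm⟩
      exact ⟨hxm, h0x, hxm.trans ((min_le_left s t).trans hs)⟩
  simp_rw [indicator_Ici_mul_indicator_Ici_mul]
  rw [lintegral_indicator measurableSet_Iic, Measure.restrict_restrict measurableSet_Iic, hIcc,
    lintegral_const_mul _ hh]

theorem setLIntegral_Icc_indicator_Ici {x τ : ℝ} (hx : 0 ≤ x) (f : ℝ → ℝ≥0∞) :
    ∫⁻ t in Icc 0 τ, (Ici x).indicator f t = ∫⁻ t in Icc x τ, f t := by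
  have hIcc : Ici x ∩ Icc 0 τ = Icc x τ := by
    ext y
    simp only [mem_inter_iff, mem_Ici, mem_Icc]
    exact ⟨fun ⟨hxy, _, hyτ⟩ => ⟨hxy, hyτ⟩, fun ⟨hxy, hyτ⟩ => ⟨hxy, hx.trans hxy, hyτ⟩⟩
  rw [lintegral_indicator measurableSet_Ici, Measure.restrict_restrict measurableSet_Ici, hIcc]

theorem rmst_variance_fubini_general
    (τ : ℝ)
    (Λ : Measure ℝ) [IsFiniteMeasure Λ]
    (g : ℝ → ℝ) (hg : Measurable g)
    (S : ℝ → ℝ) (hS : Measurable S) :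
    ∫⁻ t in Set.Icc (0:ℝ) τ, ∫⁻ s in Set.Icc (0:ℝ) τ,
        (ENNReal.ofReal (S t) * ENNReal.ofReal (S s)
          * ∫⁻ x in Set.Icc (0:ℝ) (min s t), ENNReal.ofReal (g x) ∂Λ)
      = ∫⁻ x in Set.Icc (0:ℝ) τ,
          ((∫⁻ t in Set.Icc x τ, ENNReal.ofReal (S t)) ^ 2
            * ENNReal.ofReal (g x)) ∂Λ := by
  set f : ℝ → ℝ≥0∞ := fun t => ENNReal.ofReal (S t)
  calc _ = ∫⁻ t in Icc 0 τ, ∫⁻ s in Icc 0 τ, ∫⁻ x in Icc 0 τ,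
          (Ici x).indicator f t * (Ici x).indicator f s * ENNReal.ofReal (g x) ∂Λ :=
        setLIntegral_congr_fun measurableSet_Icc fun t _ =>
          setLIntegral_congr_fun measurableSet_Icc fun s hs =>
            mul_setLIntegral_Icc_min_eq hs.2 Λ f _ hg.ennreal_ofReal
    _ = ∫⁻ x in Icc 0 τ,
          (∫⁻ t in Icc 0 τ, (Ici x).indicator f t) ^ 2 * ENNReal.ofReal (g x) ∂Λ :=
        lintegral_lintegral_lintegral_mul_mul_eq_lintegral_sq_mul
          (measurable_uncurry_indicator_Ici hS.ennreal_ofReal) hg.ennreal_ofReal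
    _ = _ :=
        setLIntegral_congr_fun measurableSet_Icc fun x hx => by
          rw [setLIntegral_Icc_indicator_Ici hx.1]

/-- **Fubini/Tonelli identity for the asymptotic RMST variance**: for a finite
Borel measure `Λ` on `[0,τ]` and nonnegative measurable `g`, `S`,
`∫_0^τ∫_0^τ S(t)S(s) (∫_{[0,min(s,t)]} g dΛ) dt ds
  = ∫_{[0,τ]} (∫_x^τ S(t)dt)² g(x) dΛ(x)`,
both sides possibly being `+∞` simultaneously. -/
theorem rmst_variance_fubini
    (τ : ℝ) (hτ : 0 < τ)
    (Λ : Measure ℝ) [IsFiniteMeasure Λ] (hΛ : Λ (Set.Icc (0:ℝ) τ)ᶜ = 0)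
    (g : ℝ → ℝ) (hg : Measurable g) (hg0 : ∀ x, 0 ≤ g x)
    (S : ℝ → ℝ) (hS : Measurable S) (hS0 : ∀ x, 0 ≤ S x) :
    ∫⁻ t in Set.Icc (0:ℝ) τ, ∫⁻ s in Set.Icc (0:ℝ) τ,
        (ENNReal.ofReal (S t) * ENNReal.ofReal (S s)
          * ∫⁻ x in Set.Icc (0:ℝ) (min s t), ENNReal.ofReal (g x) ∂Λ)
      = ∫⁻ x in Set.Icc (0:ℝ) τ,
          ((∫⁻ t in Set.Icc x τ, ENNReal.ofReal (S t)) ^ 2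
            * ENNReal.ofReal (g x)) ∂Λ :=
  rmst_variance_fubini_general τ Λ g hg S hS

end RMST
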